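/- arXiv:1801.09863 — 2 statements merged into one kernel-verified Lean document; each statement's English description precedes it below -/
import Mathlib

section
/- Let m be a positive integer. If r ∈ W̄_4 · γ_5 F_m, then in the truncated algebra A_5 over ℤ/2ℤ one has E^2(r) = 1 + Σ_{(i_1,i_2,i_3,i_4)∈{1,…,m}^4} c(i_1,i_2,i_3,i_4) X_{i_1}X_{i_2}X_{i_3}X_{i_4} for some coefficients c(i_1,i_2,i_3,i_4) ∈ ℤ/2ℤ satisfying c(i_1,i_2,i_3,i_4) = c(i_{σ(1)},i_{σ(2)},i_{σ(3)},i_{σ(4)}) for every permutation σ of {1,2,3,4}; in particular, all homogeneous components of E^2(r) of degrees 1, 2 and 3 vanish. -/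
/-- `W_n`, the set of `n`-th powers in a group `G`. -/
def powSet (G : Type*) [Group G] (n : ℕ) : Set G := {x | ∃ w : G, x = w ^ n}

/-- `W̄_n`, the normal subgroup of the free group `F_m` generated by the set `W_n`
of `n`-th powers. -/
def Wbar (m n : ℕ) : Subgroup (FreeGroup (Fin m)) :=
  Subgroup.normalClosure (powSet (FreeGroup (Fin m)) n)

instance (m n : ℕ) : (Wbar m n).Normal := Subgroup.normalClosure_normal

/-- `W̄_n · γ_q F_m`: since both factors are normal subgroups of `F_m`, this product
subgroup equals the join.  (Recall `lowerCentralSeries G 0 = G = γ₁ G`, so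
`γ_q G = lowerCentralSeries G (q-1)`.) -/
def WbarGamma (m n q : ℕ) : Subgroup (FreeGroup (Fin m)) :=
  Wbar m n ⊔ Subgroup.lowerCentralSeries (⊤ : Subgroup (FreeGroup (Fin m))) (q - 1)

instance (m n q : ℕ) : (WbarGamma m n q).Normal := Subgroup.sup_normal _ _

/-- `F^q(m,n) = F_m / (W̄_n · γ_q F_m)`. -/
def BurnsideQuot (m n q : ℕ) : Type := FreeGroup (Fin m) ⧸ WbarGamma m n q

noncomputable instance (m n q : ℕ) : Group (BurnsideQuot m n q) :=
  QuotientGroup.Quotient.group _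

/-- The monomial `X_{w₁} ⋯ X_{w_l}` in the free associative `ZMod p`-algebra `T` on
noncommuting indeterminates `X_1, …, X_m`. -/
def magnusMonomial (p m : ℕ) (w : List (Fin m)) : FreeAlgebra (ZMod p) (Fin m) :=
  (w.map (FreeAlgebra.ι (ZMod p))).prod

/-- The relation generating (as a ring congruence) the two-sided ideal `I^k`, where
`I ⊆ T` is the two-sided ideal generated by `X_1, …, X_m`: every monomial of degree `k`
is set to `0`. -/
def truncRel (p m k : ℕ) :
    FreeAlgebra (ZMod p) (Fin m) → FreeAlgebra (ZMod p) (Fin m) → Prop :=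
  fun a b => ∃ w : List (Fin m), w.length = k ∧ a = magnusMonomial p m w ∧ b = 0

/-- The truncated algebra `A_k = T/I^k`. -/
abbrev TruncAlgebra (p m k : ℕ) := RingQuot (truncRel p m k)

/-- The quotient map `T → A_k`. -/
def truncMk (p m k : ℕ) :
    FreeAlgebra (ZMod p) (Fin m) →+* TruncAlgebra p m k :=
  RingQuot.mkRingHom _

lemma isUnit_one_add_X (p m k : ℕ) (i : Fin m) :
    IsUnit (1 + truncMk p m k (FreeAlgebra.ι (ZMod p) i)) := by
  refine IsNilpotent.isUnit_one_add ⟨k, ?_⟩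
  rw [← map_pow]
  have h1 : (FreeAlgebra.ι (ZMod p) i) ^ k = magnusMonomial p m (List.replicate k i) := by
    simp [magnusMonomial, List.map_replicate, List.prod_replicate]
  have h2 : truncMk p m k (magnusMonomial p m (List.replicate k i)) = truncMk p m k 0 :=
    RingQuot.mkRingHom_rel ⟨List.replicate k i, List.length_replicate, rfl, rfl⟩
  rw [h1, h2, map_zero]

/-- The Magnus `ZMod p`-expansion truncated at degree `k`: the unique group homomorphism
`E^p : F_m → A_kˣ` with `E^p(x_i) = 1 + X_i`. -/
noncomputable def magnus (p m k : ℕ) :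
    FreeGroup (Fin m) →* (TruncAlgebra p m k)ˣ :=
  FreeGroup.lift fun i => (isUnit_one_add_X p m k i).unit

/-- The coefficient of the monomial `X_{w₁} ⋯ X_{w_l}` in an element of the free
algebra `T`, via the canonical basis of `T` given by words in `X_1, …, X_m`. -/
noncomputable def magnusCoeff (p m : ℕ) (w : List (Fin m))
    (t : FreeAlgebra (ZMod p) (Fin m)) : ZMod p :=
  (FreeAlgebra.equivMonoidAlgebraFreeMonoid (R := ZMod p) (X := Fin m) t).coeff
    (FreeMonoid.ofList w)

/-!
The Magnus expansion maps the `n`-th term of the lower central series into `1 + I ^ (n + 1)`,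
since `E(x) - 1 ∈ I` for every `x` and the commutator of `1 + a` and `1 + b` is
`1 + (a b - b a) (1 + a)⁻¹ (1 + b)⁻¹`; in particular `E(γ₅ F_m) = 1` in `A₅`.
For a fourth power, write `E(w) = 1 + t` with `t ∈ I`. Over `ℤ/2`, `(1 + t)⁴ = 1 + t⁴`, and modulo
`I⁵` the quartic `t⁴` only depends on the linear part `ℓ = ∑ aᵢ Xᵢ` of `t`, so
`E(w⁴) = 1 + ℓ⁴ = 1 + ∑ a_{i₁} ⋯ a_{i₄} X_{i₁} ⋯ X_{i₄}` has symmetric coefficients.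
Finally, the units `1 + q` with `q` a symmetric quartic form a subgroup of `A₅ˣ`, normalised by
the image of `E` because `I⁴` is annihilated by `I` in `A₅`; its preimage therefore contains
`W̄₄ · γ₅ F_m`.
-/

open FreeAlgebra

namespace FreeAlgebra

section CommSemiring

variable {R X : Type*} [CommSemiring R]

theorem basisFreeMonoid_apply (w : FreeMonoid X) :
    basisFreeMonoid R X w = ((FreeMonoid.toList w).map (ι R)).prod := by
  change equivMonoidAlgebraFreeMonoid.symm (MonoidAlgebra.single w 1) = _
  rw [AlgEquiv.symm_apply_eq]
  induction w using FreeMonoid.inductionOn' with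
  | one => simp [MonoidAlgebra.one_def]
  | of_mul x w ih =>
    rw [FreeMonoid.toList_of_mul, List.map_cons, List.prod_cons, map_mul, ← ih]
    simp [equivMonoidAlgebraFreeMonoid, MonoidAlgebra.single_mul_single]

theorem basisFreeMonoid_one : basisFreeMonoid R X 1 = 1 := by
  simp [basisFreeMonoid_apply]

theorem basisFreeMonoid_mul (u v : FreeMonoid X) :
    basisFreeMonoid R X (u * v) = basisFreeMonoid R X u * basisFreeMonoid R X v := by
  simp [basisFreeMonoid_apply, FreeMonoid.toList_mul]

theorem basisFreeMonoid_of (x : X) : basisFreeMonoid R X (.of x) = ι R x := by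
  simp [basisFreeMonoid_apply]

variable (R X) in
/-- `I ^ j`, for `I` the ideal generated by the `X_i`. -/
noncomputable def degreeGE (j : ℕ) : Submodule R (FreeAlgebra R X) :=
  Submodule.span R (basisFreeMonoid R X '' {w | j ≤ w.length})

theorem degreeGE_antitone : Antitone (degreeGE R X) := fun _ _ hij =>
  Submodule.span_mono <| Set.image_mono fun _ (hw : _ ≤ _) => hij.trans hw

@[simp]
theorem degreeGE_zero : degreeGE R X 0 = ⊤ := by
  simp [degreeGE, Module.Basis.span_eq]

theorem basisFreeMonoid_mem_degreeGE {j : ℕ} {w : FreeMonoid X} (hw : j ≤ w.length) :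
    basisFreeMonoid R X w ∈ degreeGE R X j :=
  Submodule.subset_span ⟨w, hw, rfl⟩

theorem ι_mem_degreeGE_one (x : X) : ι R x ∈ degreeGE R X 1 := by
  simpa [basisFreeMonoid_of] using basisFreeMonoid_mem_degreeGE (R := R) (w := .of x) le_rfl

theorem mul_mem_degreeGE {i j : ℕ} {a b : FreeAlgebra R X} (ha : a ∈ degreeGE R X i)
    (hb : b ∈ degreeGE R X j) : a * b ∈ degreeGE R X (i + j) := by
  have hle : degreeGE R X i * degreeGE R X j ≤ degreeGE R X (i + j) := by
    rw [degreeGE, degreeGE, Submodule.span_mul_span]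
    refine Submodule.span_mono ?_
    rintro _ ⟨_, ⟨u, hu, rfl⟩, _, ⟨v, hv, rfl⟩, rfl⟩
    exact ⟨u * v, by simp only [Set.mem_ofPred_eq, FreeMonoid.length_mul] at *; omega,
      basisFreeMonoid_mul u v⟩
  exact hle (Submodule.mul_mem_mul ha hb)

theorem mul_mem_degreeGE_left {j : ℕ} (a : FreeAlgebra R X) {b : FreeAlgebra R X}
    (hb : b ∈ degreeGE R X j) : a * b ∈ degreeGE R X j := by
  simpa using mul_mem_degreeGE (by simp : a ∈ degreeGE R X 0) hb

theorem mul_mem_degreeGE_right {j : ℕ} {a : FreeAlgebra R X} (ha : a ∈ degreeGE R X j)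
    (b : FreeAlgebra R X) : a * b ∈ degreeGE R X j := by
  simpa using mul_mem_degreeGE ha (by simp : b ∈ degreeGE R X 0)

theorem pow_mem_degreeGE {j : ℕ} {a : FreeAlgebra R X} (ha : a ∈ degreeGE R X j) :
    ∀ n : ℕ, a ^ n ∈ degreeGE R X (n * j)
  | 0 => by simp
  | n + 1 => by simpa [pow_succ, Nat.succ_mul] using mul_mem_degreeGE (pow_mem_degreeGE ha n) ha

theorem mem_degreeGE_iff {j : ℕ} {t : FreeAlgebra R X} :
    t ∈ degreeGE R X j ↔
      ∀ w : FreeMonoid X, w.length < j → (basisFreeMonoid R X).repr t w = 0 := by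
  rw [degreeGE, Module.Basis.mem_span_image]
  refine ⟨fun h w hw => ?_, fun h w hw => ?_⟩
  · by_contra hne
    exact absurd (h (Finsupp.mem_support_iff.2 hne)) (not_le.2 hw)
  · by_contra hne
    exact Finsupp.mem_support_iff.1 hw (h w (not_le.1 hne))

end CommSemiring

section CommRing

variable {R X : Type*} [CommRing R]

theorem pow_sub_pow_mem_degreeGE {a b : FreeAlgebra R X} (ha : a ∈ degreeGE R X 1)
    (hb : b ∈ degreeGE R X 1) (hab : a - b ∈ degreeGE R X 2) :
    ∀ n : ℕ, a ^ n - b ^ n ∈ degreeGE R X (n + 1)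
  | 0 => by simp
  | n + 1 => by
    have key : a ^ (n + 1) - b ^ (n + 1) = a ^ n * (a - b) + (a ^ n - b ^ n) * b := by
      noncomm_ring
    rw [key]
    exact add_mem (degreeGE_antitone (by omega) (mul_mem_degreeGE (pow_mem_degreeGE ha n) hab))
      (mul_mem_degreeGE (pow_sub_pow_mem_degreeGE ha hb hab n) hb)

variable (R X) in
noncomputable def degreeGETwoSided (k : ℕ) : TwoSidedIdeal (FreeAlgebra R X) :=
  .mk' (degreeGE R X k) (zero_mem _) add_mem neg_mem (mul_mem_degreeGE_left _)
    (mul_mem_degreeGE_right · _)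

theorem degreeGETwoSided_rel_iff {k : ℕ} {a b : FreeAlgebra R X} :
    (degreeGETwoSided R X k).ringCon a b ↔ a - b ∈ degreeGE R X k := by
  rw [TwoSidedIdeal.rel_iff, degreeGETwoSided, TwoSidedIdeal.mem_mk', SetLike.mem_coe]

variable [Fintype X]

noncomputable def linearPart (t : FreeAlgebra R X) : FreeAlgebra R X :=
  ∑ x, (basisFreeMonoid R X).repr t (.of x) • ι R x

theorem linearPart_mem_degreeGE_one (t : FreeAlgebra R X) : linearPart t ∈ degreeGE R X 1 :=
  sum_mem fun x _ => Submodule.smul_mem _ _ (ι_mem_degreeGE_one x)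

theorem sub_linearPart_mem_degreeGE_two {t : FreeAlgebra R X} (ht : t ∈ degreeGE R X 1) :
    t - linearPart t ∈ degreeGE R X 2 := by
  classical
  have hrepr : ∀ w, (basisFreeMonoid R X).repr (linearPart t) w =
      ∑ x, Finsupp.single (FreeMonoid.of x) ((basisFreeMonoid R X).repr t (.of x)) w := by
    simp [linearPart, ← basisFreeMonoid_of]
  refine mem_degreeGE_iff.2 fun w hw => ?_
  rw [map_sub, Finsupp.sub_apply, hrepr, sub_eq_zero]
  rcases (by omega : w.length = 0 ∨ w.length = 1) with h0 | h1
  · obtain rfl := FreeMonoid.length_eq_zero.1 h0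
    simp [mem_degreeGE_iff.1 ht 1 (by simp)]
  · obtain ⟨y, rfl⟩ := FreeMonoid.length_eq_one.1 h1
    simp [Finsupp.single_apply, FreeMonoid.of_injective.eq_iff]

theorem sum_smul_ι_pow (ℓ : X → R) : ∀ n : ℕ, (∑ x, ℓ x • ι R x) ^ n =
    ∑ f : Fin n → X, (∏ j, ℓ (f j)) • ((List.ofFn f).map (ι R)).prod
  | 0 => by simp
  | n + 1 => by
    rw [pow_succ', sum_smul_ι_pow ℓ n, Finset.sum_mul_sum,
      ← (Fin.consEquiv fun _ : Fin (n + 1) => X).sum_comp, Fintype.sum_prod_type]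
    simp [Fin.prod_univ_succ, List.ofFn_succ, Fin.consEquiv, smul_smul, mul_comm]

end CommRing

end FreeAlgebra

section Truncation

variable {p m k : ℕ}

theorem magnusMonomial_eq_basisFreeMonoid (w : List (Fin m)) :
    magnusMonomial p m w = basisFreeMonoid (ZMod p) (Fin m) (FreeMonoid.ofList w) :=
  (basisFreeMonoid_apply _).symm

theorem magnusCoeff_eq_repr (w : List (Fin m)) (t : FreeAlgebra (ZMod p) (Fin m)) :
    magnusCoeff p m w t = (basisFreeMonoid (ZMod p) (Fin m)).repr t (FreeMonoid.ofList w) :=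
  rfl

theorem magnusMonomial_append (u v : List (Fin m)) :
    magnusMonomial p m (u ++ v) = magnusMonomial p m u * magnusMonomial p m v := by
  simp [magnusMonomial]

theorem truncMk_apply (t : FreeAlgebra (ZMod p) (Fin m)) :
    truncMk p m k t = RingQuot.mkAlgHom (ZMod p) (truncRel p m k) t := by
  rw [truncMk, ← RingQuot.mkAlgHom_coe (ZMod p)]
  rfl

theorem truncMk_smul (c : ZMod p) (t : FreeAlgebra (ZMod p) (Fin m)) :
    truncMk p m k (c • t) = c • truncMk p m k t := by
  simp only [truncMk_apply, map_smul]

theorem truncMk_magnusMonomial_eq_zero {w : List (Fin m)} (hw : k ≤ w.length) :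
    truncMk p m k (magnusMonomial p m w) = 0 := by
  have hk : truncMk p m k (magnusMonomial p m (w.take k)) = 0 := by
    rw [← map_zero (truncMk p m k)]
    exact RingQuot.mkRingHom_rel ⟨_, by simpa using hw, rfl, rfl⟩
  rw [← List.take_append_drop k w, magnusMonomial_append, map_mul, hk, zero_mul]

theorem truncMk_eq_zero_of_mem_degreeGE {t : FreeAlgebra (ZMod p) (Fin m)}
    (ht : t ∈ degreeGE (ZMod p) (Fin m) k) : truncMk p m k t = 0 := by
  suffices degreeGE (ZMod p) (Fin m) k ≤
      LinearMap.ker (RingQuot.mkAlgHom (ZMod p) (truncRel p m k)).toLinearMap by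
    simpa [truncMk_apply] using this ht
  refine Submodule.span_le.2 ?_
  rintro _ ⟨w, hw, rfl⟩
  rw [SetLike.mem_coe, LinearMap.mem_ker, AlgHom.toLinearMap_apply, ← truncMk_apply,
    ← FreeMonoid.ofList_toList w, ← magnusMonomial_eq_basisFreeMonoid]
  exact truncMk_magnusMonomial_eq_zero hw

theorem sub_mem_degreeGE_of_truncMk_eq {t t' : FreeAlgebra (ZMod p) (Fin m)}
    (h : truncMk p m k t = truncMk p m k t') : t - t' ∈ degreeGE (ZMod p) (Fin m) k := by
  set I := degreeGETwoSided (ZMod p) (Fin m) k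
  let φ : TruncAlgebra p m k →+* I.ringCon.Quotient := RingQuot.lift ⟨I.ringCon.mk', by
    rintro _ _ ⟨w, hw, rfl, rfl⟩
    refine (RingCon.eq _).2 (degreeGETwoSided_rel_iff.2 ?_)
    rw [sub_zero, magnusMonomial_eq_basisFreeMonoid]
    exact basisFreeMonoid_mem_degreeGE hw.ge⟩
  have hφ := congrArg φ h
  simp only [φ, truncMk, RingQuot.lift_mkRingHom_apply] at hφ
  exact degreeGETwoSided_rel_iff.1 ((RingCon.eq _).1 hφ)

theorem magnusCoeff_eq_zero_of_truncMk_eq_one_add {j : ℕ} {t q : FreeAlgebra (ZMod p) (Fin m)}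
    (hq : q ∈ degreeGE (ZMod p) (Fin m) j) (hjk : j ≤ k)
    (ht : truncMk p m k t = 1 + truncMk p m k q) {w : List (Fin m)} (hw1 : 1 ≤ w.length)
    (hwj : w.length < j) : magnusCoeff p m w t = 0 := by
  have ht1 : t - 1 ∈ degreeGE (ZMod p) (Fin m) j := by
    have hk : t - (1 + q) ∈ degreeGE (ZMod p) (Fin m) k :=
      sub_mem_degreeGE_of_truncMk_eq (by rw [ht, map_add, map_one])
    have := add_mem (degreeGE_antitone hjk hk) hq
    rwa [sub_add_eq_sub_sub, sub_add_cancel] at this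
  have hw : FreeMonoid.ofList w ≠ 1 := mt FreeMonoid.length_eq_zero.2 (by change w.length ≠ 0; omega)
  rw [magnusCoeff_eq_repr, ← sub_add_cancel t 1, map_add, Finsupp.add_apply,
    mem_degreeGE_iff.1 ht1 (.ofList w) hwj, zero_add, ← basisFreeMonoid_one, Module.Basis.repr_self,
    Finsupp.single_eq_of_ne hw]

end Truncation

open scoped commutatorElement in
theorem Units.val_commutatorElement {R : Type*} [Ring R] (a b : Rˣ) :
    (↑⁅a, b⁆ : R) = 1 + (a * b - b * a) * ↑(a⁻¹ * b⁻¹) := by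
  have h : (b * a : R) * ↑(a⁻¹ * b⁻¹) = 1 := by simp [mul_assoc]
  rw [sub_mul, h, add_sub_cancel, commutatorElement_def]
  simp [mul_assoc]

section MagnusFiltration

variable {p m k : ℕ}

theorem truncMk_surjective : Function.Surjective (truncMk p m k) :=
  RingQuot.mkRingHom_surjective _

theorem magnus_of (i : Fin m) :
    (magnus p m k (.of i) : TruncAlgebra p m k) = 1 + truncMk p m k (ι (ZMod p) i) := by
  simp [magnus]

/-- The `n`-th mod-`p` dimension subgroup, as seen by the Magnus expansion truncated at `k`. -/
def magnusFiltration (p m k n : ℕ) : Subgroup (FreeGroup (Fin m)) where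
  carrier := {r | ∃ t ∈ degreeGE (ZMod p) (Fin m) n,
    (magnus p m k r : TruncAlgebra p m k) = 1 + truncMk p m k t}
  one_mem' := ⟨0, zero_mem _, by simp⟩
  mul_mem' := by
    rintro r s ⟨t, ht, hr⟩ ⟨u, hu, hs⟩
    refine ⟨t + u + t * u, add_mem (add_mem ht hu) (mul_mem_degreeGE_right ht u), ?_⟩
    rw [map_mul, Units.val_mul, hr, hs]
    simp only [map_add, map_mul]
    noncomm_ring
  inv_mem' := by
    rintro r ⟨t, ht, hr⟩
    obtain ⟨s, hs⟩ := truncMk_surjective (magnus p m k r⁻¹ : TruncAlgebra p m k)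
    refine ⟨-(s * t), neg_mem (mul_mem_degreeGE_left s ht), ?_⟩
    calc (magnus p m k r⁻¹ : TruncAlgebra p m k)
        = magnus p m k r⁻¹ * (magnus p m k r - truncMk p m k t) := by
          rw [hr, add_sub_cancel_right, mul_one]
      _ = 1 + truncMk p m k (-(s * t)) := by
          rw [mul_sub, ← Units.val_mul, ← map_mul, inv_mul_cancel, map_one, Units.val_one,
            map_neg, map_mul, hs, sub_eq_add_neg]

theorem mem_magnusFiltration_one (g : FreeGroup (Fin m)) : g ∈ magnusFiltration p m k 1 := by
  refine (Subgroup.closure_le _).2 ?_ (FreeGroup.closure_range_of (Fin m) ▸ Subgroup.mem_top g)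
  rintro _ ⟨i, rfl⟩
  exact ⟨ι (ZMod p) i, ι_mem_degreeGE_one i, magnus_of i⟩

open scoped commutatorElement in
theorem commutatorElement_mem_magnusFiltration {i j : ℕ} {r s : FreeGroup (Fin m)}
    (hr : r ∈ magnusFiltration p m k i) (hs : s ∈ magnusFiltration p m k j) :
    ⁅r, s⁆ ∈ magnusFiltration p m k (i + j) := by
  obtain ⟨t, ht, hr⟩ := hr
  obtain ⟨u, hu, hs⟩ := hs
  obtain ⟨v, hv⟩ := truncMk_surjective (↑((magnus p m k r)⁻¹ * (magnus p m k s)⁻¹) :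
    TruncAlgebra p m k)
  have htu : t * u - u * t ∈ degreeGE (ZMod p) (Fin m) (i + j) :=
    sub_mem (mul_mem_degreeGE ht hu) (add_comm j i ▸ mul_mem_degreeGE hu ht)
  refine ⟨(t * u - u * t) * v, mul_mem_degreeGE_right htu v, ?_⟩
  rw [map_commutatorElement, Units.val_commutatorElement, hr, hs, ← hv, map_mul, map_sub, map_mul,
    map_mul]
  congr 2
  noncomm_ring

theorem lowerCentralSeries_le_magnusFiltration :
    ∀ n : ℕ, (⊤ : Subgroup (FreeGroup (Fin m))).lowerCentralSeries n ≤
      magnusFiltration p m k (n + 1)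
  | 0 => fun r _ => mem_magnusFiltration_one r
  | n + 1 => Subgroup.commutator_le.2 fun _ hr s _ =>
    commutatorElement_mem_magnusFiltration (lowerCentralSeries_le_magnusFiltration n hr)
      (mem_magnusFiltration_one s)

theorem magnus_eq_one_of_mem_lowerCentralSeries {n : ℕ} {r : FreeGroup (Fin m)}
    (hr : r ∈ (⊤ : Subgroup (FreeGroup (Fin m))).lowerCentralSeries n) :
    magnus p m (n + 1) r = 1 := by
  obtain ⟨t, ht, hrt⟩ := lowerCentralSeries_le_magnusFiltration n hr
  exact Units.ext (by rw [hrt, truncMk_eq_zero_of_mem_degreeGE ht, add_zero, Units.val_one])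

end MagnusFiltration

theorem one_add_pow_four_of_two_eq_zero {A : Type*} [Ring A] (h2 : (2 : A) = 0) (x : A) :
    (1 + x) ^ 4 = 1 + x ^ 4 := by
  have hsq (y : A) : (1 + y) ^ 2 = 1 + y ^ 2 := by
    rw [show (1 + y) ^ 2 = 1 + 2 * y + y ^ 2 by noncomm_ring, h2, zero_mul, add_zero]
  rw [show 4 = 2 * 2 from rfl, pow_mul, hsq, hsq, ← pow_mul]

section SymmetricForms

variable {p m d : ℕ}

variable (p m d) in
def symmetricCoeffs : Submodule (ZMod p) ((Fin d → Fin m) → ZMod p) where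
  carrier := {c | ∀ (f : Fin d → Fin m) (σ : Equiv.Perm (Fin d)), c (f ∘ σ) = c f}
  zero_mem' _ _ := rfl
  add_mem' ha hb f σ := congrArg₂ (· + ·) (ha f σ) (hb f σ)
  smul_mem' a _ hc f σ := congrArg (a • ·) (hc f σ)

theorem prod_mem_symmetricCoeffs (a : Fin m → ZMod p) :
    (fun f => ∏ j, a (f j)) ∈ symmetricCoeffs p m d :=
  fun f σ => Equiv.prod_comp σ (a ∘ f)

variable (p m d) in
noncomputable def homogeneousForm :
    ((Fin d → Fin m) → ZMod p) →ₗ[ZMod p] FreeAlgebra (ZMod p) (Fin m) :=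
  Fintype.linearCombination (ZMod p) fun f => magnusMonomial p m (List.ofFn f)

theorem truncMk_homogeneousForm {k : ℕ} (c : (Fin d → Fin m) → ZMod p) :
    truncMk p m k (homogeneousForm p m d c) =
      ∑ f : Fin d → Fin m, c f • truncMk p m k (magnusMonomial p m (List.ofFn f)) := by
  simp only [homogeneousForm, Fintype.linearCombination_apply, map_sum, truncMk_smul]

theorem homogeneousForm_prod (a : Fin m → ZMod p) :
    homogeneousForm p m d (fun f => ∏ j, a (f j)) = (∑ i, a i • ι (ZMod p) i) ^ d := by
  rw [sum_smul_ι_pow]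
  rfl

theorem homogeneousForm_mem_degreeGE (c : (Fin d → Fin m) → ZMod p) :
    homogeneousForm p m d c ∈ degreeGE (ZMod p) (Fin m) d := by
  rw [homogeneousForm, Fintype.linearCombination_apply]
  refine sum_mem fun f _ => Submodule.smul_mem _ _ ?_
  rw [magnusMonomial_eq_basisFreeMonoid]
  exact basisFreeMonoid_mem_degreeGE (List.length_ofFn).ge

theorem one_add_truncMk_homogeneousForm_mul [NeZero d] (c c' : (Fin d → Fin m) → ZMod p) :
    (1 + truncMk p m (d + 1) (homogeneousForm p m d c)) *
        (1 + truncMk p m (d + 1) (homogeneousForm p m d c')) =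
      1 + truncMk p m (d + 1) (homogeneousForm p m d (c + c')) := by
  have hprod : truncMk p m (d + 1) (homogeneousForm p m d c * homogeneousForm p m d c') = 0 := by
    refine truncMk_eq_zero_of_mem_degreeGE (degreeGE_antitone ?_
      (mul_mem_degreeGE (homogeneousForm_mem_degreeGE c) (homogeneousForm_mem_degreeGE c')))
    have := NeZero.one_le (n := d)
    omega
  rw [map_mul] at hprod
  rw [mul_add, mul_one, add_mul, one_mul, hprod, add_zero, map_add, map_add, add_assoc]

variable (p m d) in
def symmetricFormUnits [NeZero d] : Subgroup (TruncAlgebra p m (d + 1))ˣ where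
  carrier := {u | ∃ c ∈ symmetricCoeffs p m d,
    (u : TruncAlgebra p m (d + 1)) = 1 + truncMk p m (d + 1) (homogeneousForm p m d c)}
  one_mem' := ⟨0, zero_mem _, by simp⟩
  mul_mem' := by
    rintro u v ⟨c, hc, hu⟩ ⟨c', hc', hv⟩
    refine ⟨c + c', add_mem hc hc', ?_⟩
    rw [Units.val_mul, hu, hv, one_add_truncMk_homogeneousForm_mul]
  inv_mem' := by
    rintro u ⟨c, hc, hu⟩
    refine ⟨-c, neg_mem hc, Units.inv_eq_of_mul_eq_one_right ?_⟩
    rw [hu, one_add_truncMk_homogeneousForm_mul, add_neg_cancel, map_zero, map_zero, add_zero]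

theorem truncMk_mul_magnus {q : FreeAlgebra (ZMod p) (Fin m)}
    (hq : q ∈ degreeGE (ZMod p) (Fin m) d) (g : FreeGroup (Fin m)) :
    truncMk p m (d + 1) q * magnus p m (d + 1) g = truncMk p m (d + 1) q := by
  obtain ⟨s, hs, hg⟩ := mem_magnusFiltration_one (p := p) (k := d + 1) g
  rw [hg, mul_add, mul_one, ← map_mul, truncMk_eq_zero_of_mem_degreeGE (mul_mem_degreeGE hq hs),
    add_zero]

theorem magnus_mul_truncMk {q : FreeAlgebra (ZMod p) (Fin m)}
    (hq : q ∈ degreeGE (ZMod p) (Fin m) d) (g : FreeGroup (Fin m)) :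
    magnus p m (d + 1) g * truncMk p m (d + 1) q = truncMk p m (d + 1) q := by
  obtain ⟨s, hs, hg⟩ := mem_magnusFiltration_one (p := p) (k := d + 1) g
  have hsq := mul_mem_degreeGE hs hq
  rw [add_comm] at hsq
  rw [hg, add_mul, one_mul, ← map_mul, truncMk_eq_zero_of_mem_degreeGE hsq, add_zero]

instance [NeZero d] : ((symmetricFormUnits p m d).comap (magnus p m (d + 1))).Normal where
  conj_mem r := by
    rintro ⟨c, hc, hr⟩ g
    refine ⟨c, hc, ?_⟩
    rw [map_mul, map_mul, Units.val_mul, Units.val_mul, hr, mul_add, mul_one, add_mul,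
      magnus_mul_truncMk (homogeneousForm_mem_degreeGE c),
      truncMk_mul_magnus (homogeneousForm_mem_degreeGE c), ← Units.val_mul, ← map_mul,
      mul_inv_cancel, map_one, Units.val_one]

end SymmetricForms

section Burnside

variable {m : ℕ}

theorem magnus_pow_four_mem_symmetricFormUnits (w : FreeGroup (Fin m)) :
    magnus 2 m 5 (w ^ 4) ∈ symmetricFormUnits 2 m 4 := by
  obtain ⟨t, ht, hw⟩ := mem_magnusFiltration_one (p := 2) (k := 5) w
  have hpow : truncMk 2 m 5 (t ^ 4) = truncMk 2 m 5 (linearPart t ^ 4) := by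
    rw [← sub_eq_zero, ← map_sub]
    exact truncMk_eq_zero_of_mem_degreeGE (pow_sub_pow_mem_degreeGE ht
      (linearPart_mem_degreeGE_one t) (sub_linearPart_mem_degreeGE_two ht) 4)
  have h2 : (2 : TruncAlgebra 2 m 5) = 0 := by
    rw [← map_ofNat (algebraMap (ZMod 2) (TruncAlgebra 2 m 5)) 2, show (2 : ZMod 2) = 0 from rfl,
      map_zero]
  let a : Fin m → ZMod 2 := fun i => (basisFreeMonoid (ZMod 2) (Fin m)).repr t (.of i)
  have hℓ : linearPart t = ∑ i, a i • ι (ZMod 2) i := rfl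
  refine ⟨_, prod_mem_symmetricCoeffs a, ?_⟩
  rw [homogeneousForm_prod, ← hℓ, map_pow, Units.val_pow_eq_pow_val, hw,
    one_add_pow_four_of_two_eq_zero h2, ← map_pow, hpow]

theorem WbarGamma_four_five_le_comap_magnus :
    WbarGamma m 4 5 ≤ (symmetricFormUnits 2 m 4).comap (magnus 2 m 5) := by
  refine sup_le (Subgroup.normalClosure_le_normal ?_) fun r hr => ?_
  · rintro _ ⟨w, rfl⟩
    exact magnus_pow_four_mem_symmetricFormUnits w
  · rw [Subgroup.mem_comap, magnus_eq_one_of_mem_lowerCentralSeries (n := 4) hr]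
    exact one_mem _

end Burnside

theorem magnus_of_mem_WbarGamma_four_general (m : ℕ)
    (r : FreeGroup (Fin m)) (hr : r ∈ WbarGamma m 4 5) :
    ∃ c : (Fin 4 → Fin m) → ZMod 2,
      (∀ (f : Fin 4 → Fin m) (σ : Equiv.Perm (Fin 4)), c (f ∘ σ) = c f) ∧
      (↑(magnus 2 m 5 r) : TruncAlgebra 2 m 5) =
        1 + ∑ f : Fin 4 → Fin m,
          c f • truncMk 2 m 5 (magnusMonomial 2 m (List.ofFn f)) ∧
      (∀ w : List (Fin m), 1 ≤ w.length → w.length ≤ 3 →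
        ∀ t : FreeAlgebra (ZMod 2) (Fin m),
          truncMk 2 m 5 t = ↑(magnus 2 m 5 r) →
            magnusCoeff 2 m w t = 0) := by
  obtain ⟨c, hc, hrc⟩ := WbarGamma_four_five_le_comap_magnus hr
  refine ⟨c, hc, hrc.trans (by rw [truncMk_homogeneousForm]), fun w hw1 hw3 t ht => ?_⟩
  exact magnusCoeff_eq_zero_of_truncMk_eq_one_add (homogeneousForm_mem_degreeGE c) (by norm_num)
    (ht.trans hrc) hw1 (by omega)

/-- Let `m` be a positive integer.  If `r ∈ W̄_4 · γ_5 F_m`, then in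
`A_5` over `ℤ/2ℤ` one has `E^2(r) = 1 + Σ c(i₁,i₂,i₃,i₄) X_{i₁}X_{i₂}X_{i₃}X_{i₄}` with
coefficients symmetric under all permutations of `{1,2,3,4}`; in particular all
homogeneous components of `E^2(r)` of degrees `1`, `2` and `3` vanish. -/
theorem magnus_of_mem_WbarGamma_four (m : ℕ) (hm : 0 < m)
    (r : FreeGroup (Fin m)) (hr : r ∈ WbarGamma m 4 5) :
    ∃ c : (Fin 4 → Fin m) → ZMod 2,
      (∀ (f : Fin 4 → Fin m) (σ : Equiv.Perm (Fin 4)), c (f ∘ σ) = c f) ∧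
      (↑(magnus 2 m 5 r) : TruncAlgebra 2 m 5) =
        1 + ∑ f : Fin 4 → Fin m,
          c f • truncMk 2 m 5 (magnusMonomial 2 m (List.ofFn f)) ∧
      (∀ w : List (Fin m), 1 ≤ w.length → w.length ≤ 3 →
        ∀ t : FreeAlgebra (ZMod 2) (Fin m),
          truncMk 2 m 5 t = ↑(magnus 2 m 5 r) →
            magnusCoeff 2 m w t = 0) :=
  magnus_of_mem_WbarGamma_four_general m r hr
end

section
/- There exists an index i ∈ {1, …, 5} such that the element r_i ∈ F_5 does not belong to the subgroup W̄_4 · γ_5 F_5 (because some term of degree 3 survives in the Magnus ℤ_2-expansion E^2(r_i)). -/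
/-- The generators `x_1, …, x_5` of the free group `F_5` (`xF5 i` is `x_{i+1}`). -/
def xF5 (i : Fin 5) : FreeGroup (Fin 5) := FreeGroup.of i

/-- `Q_i = x_1x_2⁻¹x_3x_4⁻¹x_5x_1⁻¹x_2x_3⁻¹x_4x_5⁻¹ · x_i ·
x_5⁻¹x_4x_3⁻¹x_2x_1⁻¹x_5x_4⁻¹x_3x_2⁻¹x_1 ∈ F_5`. -/
def QF5 (i : Fin 5) : FreeGroup (Fin 5) :=
  xF5 0 * (xF5 1)⁻¹ * xF5 2 * (xF5 3)⁻¹ * xF5 4 *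
  (xF5 0)⁻¹ * xF5 1 * (xF5 2)⁻¹ * xF5 3 * (xF5 4)⁻¹ *
  xF5 i *
  (xF5 4)⁻¹ * xF5 3 * (xF5 2)⁻¹ * xF5 1 * (xF5 0)⁻¹ *
  xF5 4 * (xF5 3)⁻¹ * xF5 2 * (xF5 1)⁻¹ * xF5 0

/-- `r_i = Q_i x_i⁻¹`, the relators of the associated core group of the closure of
the 5-braid `(σ₁σ₂σ₃σ₄)^{10}`. -/
def rF5 (i : Fin 5) : FreeGroup (Fin 5) := QF5 i * (xF5 i)⁻¹

/-! The upper unitriangular 4 × 4 matrices over `𝔽₂` form a group of exponent 4 and nilpotency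
class 3, so every homomorphism from `F_5` to it factors through `F_5 / W̄_4 · γ_5 F_5`. Sending the
generators to five suitable such matrices sends `r_1` to the nontrivial central matrix `1 + E₁₄`. -/

/-- The upper unitriangular 4 × 4 matrix whose entry at `(i, j)`, `i < j`, is `xij`. -/
@[ext]
structure UT4 (R : Type*) where
  x12 : R
  x13 : R
  x14 : R
  x23 : R
  x24 : R
  x34 : R
  deriving DecidableEq

namespace UT4

variable {R : Type*} [CommRing R]

instance : One (UT4 R) := ⟨⟨0, 0, 0, 0, 0, 0⟩⟩

instance : Mul (UT4 R) :=
  ⟨fun x y => ⟨x.x12 + y.x12, x.x13 + y.x13 + x.x12 * y.x23,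
    x.x14 + y.x14 + x.x12 * y.x24 + x.x13 * y.x34, x.x23 + y.x23,
    x.x24 + y.x24 + x.x23 * y.x34, x.x34 + y.x34⟩⟩

instance : Inv (UT4 R) :=
  ⟨fun x => ⟨-x.x12, -x.x13 + x.x12 * x.x23,
    -x.x14 + x.x12 * x.x24 + x.x13 * x.x34 - x.x12 * x.x23 * x.x34, -x.x23,
    -x.x24 + x.x23 * x.x34, -x.x34⟩⟩

theorem one_def : (1 : UT4 R) = ⟨0, 0, 0, 0, 0, 0⟩ := rfl

theorem mul_def (x y : UT4 R) : x * y = ⟨x.x12 + y.x12, x.x13 + y.x13 + x.x12 * y.x23,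
    x.x14 + y.x14 + x.x12 * y.x24 + x.x13 * y.x34, x.x23 + y.x23,
    x.x24 + y.x24 + x.x23 * y.x34, x.x34 + y.x34⟩ := rfl

theorem inv_def (x : UT4 R) : x⁻¹ = ⟨-x.x12, -x.x13 + x.x12 * x.x23,
    -x.x14 + x.x12 * x.x24 + x.x13 * x.x34 - x.x12 * x.x23 * x.x34, -x.x23,
    -x.x24 + x.x23 * x.x34, -x.x34⟩ := rfl

instance : Group (UT4 R) :=
  Group.ofLeftAxioms
    (fun x y z => by ext <;> simp only [mul_def] <;> ring)
    (fun x => by ext <;> simp only [mul_def, one_def] <;> ring)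
    (fun x => by ext <;> simp only [mul_def, inv_def, one_def] <;> ring)

/-- `(1 + N)⁴ = 1 + 4N + 6N² + 4N³` since `N⁴ = 0`. -/
theorem pow_four_eq_one (h2 : (2 : R) = 0) (g : UT4 R) : g ^ 4 = 1 := by
  have h4 : (4 : R) = 0 := by linear_combination 2 * h2
  have h6 : (6 : R) = 0 := by linear_combination 3 * h2
  ext <;> simp only [pow_succ, pow_zero, mul_def, one_def] <;> ring_nf <;> simp [h4, h6]

def superdiagZero : Subgroup (UT4 R) where
  carrier := {x | x.x12 = 0 ∧ x.x23 = 0 ∧ x.x34 = 0}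
  one_mem' := ⟨rfl, rfl, rfl⟩
  mul_mem' := by
    rintro x y ⟨hx12, hx23, hx34⟩ ⟨hy12, hy23, hy34⟩
    simp [mul_def, *]
  inv_mem' := by
    rintro x ⟨h12, h23, h34⟩
    simp [inv_def, *]

def cornerOnly : Subgroup (UT4 R) where
  carrier := {x | x.x12 = 0 ∧ x.x13 = 0 ∧ x.x23 = 0 ∧ x.x24 = 0 ∧ x.x34 = 0}
  one_mem' := ⟨rfl, rfl, rfl, rfl, rfl⟩
  mul_mem' := by
    rintro x y ⟨hx12, hx13, hx23, hx24, hx34⟩ ⟨hy12, hy13, hy23, hy24, hy34⟩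
    simp [mul_def, *]
  inv_mem' := by
    rintro x ⟨h12, h13, h23, h24, h34⟩
    simp [inv_def, *]

open scoped commutatorElement

theorem commutator_mem_superdiagZero (g h : UT4 R) : ⁅g, h⁆ ∈ superdiagZero := by
  refine ⟨?_, ?_, ?_⟩ <;> simp only [commutatorElement_def, mul_def, inv_def] <;> ring

theorem commutator_mem_cornerOnly {g : UT4 R} (hg : g ∈ superdiagZero) (h : UT4 R) :
    ⁅g, h⁆ ∈ cornerOnly := by
  obtain ⟨h12, h23, h34⟩ := hg
  refine ⟨?_, ?_, ?_, ?_, ?_⟩ <;>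
    simp only [commutatorElement_def, mul_def, inv_def, h12, h23, h34] <;> ring

theorem commutator_eq_one {g : UT4 R} (hg : g ∈ cornerOnly) (h : UT4 R) : ⁅g, h⁆ = 1 := by
  obtain ⟨h12, h13, h23, h24, h34⟩ := hg
  ext <;> simp only [commutatorElement_def, mul_def, inv_def, one_def, h12, h13, h23, h24, h34] <;>
    ring

theorem lowerCentralSeries_three_eq_bot : (⊤ : Subgroup (UT4 R)).lowerCentralSeries 3 = ⊥ := by
  have h1 : (⊤ : Subgroup (UT4 R)).lowerCentralSeries 1 ≤ superdiagZero :=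
    Subgroup.commutator_le.mpr fun g _ h _ => commutator_mem_superdiagZero g h
  have h2 : (⊤ : Subgroup (UT4 R)).lowerCentralSeries 2 ≤ cornerOnly :=
    Subgroup.commutator_le.mpr fun g hg h _ => commutator_mem_cornerOnly (h1 hg) h
  exact eq_bot_iff.mpr <| Subgroup.commutator_le.mpr fun g hg h _ =>
    (commutator_eq_one (h2 hg) h).symm ▸ one_mem _

end UT4

theorem MonoidHom.lowerCentralSeries_le_ker {G H : Type*} [Group G] [Group H] (f : G →* H)
    {k : ℕ} (h : (⊤ : Subgroup H).lowerCentralSeries k = ⊥) :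
    (⊤ : Subgroup G).lowerCentralSeries k ≤ f.ker := by
  rw [← MonoidHom.comap_bot, ← Subgroup.map_le_iff_le_comap, Subgroup.map_lowerCentralSeries, ← h]
  exact Subgroup.lowerCentralSeries_mono k le_top

theorem Wbar_le_ker {m n : ℕ} {G : Type*} [Group G] (f : FreeGroup (Fin m) →* G)
    (hpow : ∀ g : G, g ^ n = 1) : Wbar m n ≤ f.ker :=
  Subgroup.normalClosure_le_normal <| by
    rintro _ ⟨w, rfl⟩
    rw [SetLike.mem_coe, MonoidHom.mem_ker, map_pow, hpow]

theorem WbarGamma_le_ker {m n q k : ℕ} {G : Type*} [Group G] (f : FreeGroup (Fin m) →* G)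
    (hpow : ∀ g : G, g ^ n = 1) (hlcs : (⊤ : Subgroup G).lowerCentralSeries k = ⊥) (hkq : k < q) :
    WbarGamma m n q ≤ f.ker :=
  sup_le (Wbar_le_ker f hpow) <|
    (Subgroup.lowerCentralSeries_antitone _ (Nat.le_sub_one_of_lt hkq)).trans
      (f.lowerCentralSeries_le_ker hlcs)

def generatorImages : Fin 5 → UT4 (ZMod 2) :=
  ![⟨1, 1, 0, 0, 1, 1⟩, ⟨1, 0, 0, 1, 1, 0⟩, ⟨1, 1, 1, 1, 0, 1⟩,
    ⟨1, 0, 1, 1, 0, 1⟩, ⟨0, 1, 1, 0, 1, 1⟩]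

theorem lift_generatorImages_rF5_zero :
    FreeGroup.lift generatorImages (rF5 0) = ⟨0, 0, 1, 0, 0, 0⟩ := by
  simp only [rF5, QF5, xF5, map_mul, map_inv, FreeGroup.lift_apply_of]
  decide

/-- There exists an index `i ∈ {1, …, 5}` such that `r_i ∈ F_5` does
not belong to the subgroup `W̄_4 · γ_5 F_5`. -/
theorem exists_rF5_not_mem_WbarGamma_four :
    ∃ i : Fin 5, rF5 i ∉ WbarGamma 5 4 5 := by
  refine ⟨0, fun hmem => ?_⟩
  have hker : rF5 0 ∈ (FreeGroup.lift generatorImages).ker :=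
    WbarGamma_le_ker _ (UT4.pow_four_eq_one (by decide)) UT4.lowerCentralSeries_three_eq_bot
      (by norm_num) hmem
  rw [MonoidHom.mem_ker, lift_generatorImages_rF5_zero] at hker
  exact absurd (congrArg UT4.x14 hker) (by decide)
end
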